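/- arXiv:1712.01374 — 2 statements merged into one kernel-verified Lean document; each statement's English description precedes it below -/
import Mathlib

section
/- Let 0 < p ≤ 2 and let a, b be real numbers with 0 ≤ b ≤ a and a > 0. Then a^(p-2) * (a^2 - b^2) ≤ (2/p) * (a^p - b^p). -/
open Real

theorem stmt_0 (p a b : ℝ) (hp : 0 < p) (hp2 : p ≤ 2)
    (hb : 0 ≤ b) (hba : b ≤ a) (ha : 0 < a) :
    a ^ (p - 2) * (a ^ (2 : ℝ) - b ^ (2 : ℝ)) ≤ (2 / p) * (a ^ p - b ^ p) := by
  rw [show (2:ℝ) = ((2:ℕ):ℝ) by norm_num, rpow_natCast a 2, rpow_natCast b 2]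
  obtain ⟨t, ht⟩ : ∃ t : ℝ, t = b / a := ⟨_, rfl⟩
  have ht0 : 0 ≤ t := ht ▸ div_nonneg hb ha.le
  have ht1 : t ≤ 1 := ht ▸ (div_le_one ha).2 hba
  have hbern : (t ^ 2) ^ (p/2) ≤ 1 + (p/2) * (t ^ 2 - 1) := by
    have := rpow_one_add_le_one_add_mul_self (s := t ^ 2 - 1)
      (by nlinarith [sq_nonneg t]) (p := p/2) (by positivity) (by linarith)
    simpa using this
  have htp : (t ^ 2) ^ (p/2) = t ^ p := by
    rw [← rpow_natCast t 2, ← rpow_mul ht0]; congr 1; ring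
  rw [htp] at hbern
  have hb2 : b ^ 2 = a ^ 2 * t ^ 2 := by
    rw [ht]; field_simp
  have hbp : b ^ p = a ^ p * t ^ p := by
    rw [← mul_rpow ha.le ht0]
    rw [ht]; congr 1; field_simp
  have ha2 : a ^ (p - 2) * a ^ 2 = a ^ p := by
    rw [← rpow_natCast a 2, ← rpow_add ha]; norm_num
  have hap : (0:ℝ) < a ^ p := rpow_pos_of_pos ha p
  calc a ^ (p - 2) * (a ^ 2 - b ^ 2)
      = a ^ p * (1 - t ^ 2) := by rw [hb2, ← ha2]; ring
    _ ≤ a ^ p * ((2/p) * (1 - t ^ p)) := by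
        apply mul_le_mul_of_nonneg_left _ hap.le
        rw [div_mul_eq_mul_div, le_div_iff₀ hp]
        nlinarith
    _ = (2 / p) * (a ^ p - b ^ p) := by rw [hbp]; ring
end

section
/- Let (Ω, F, μ) be a probability space with a filtration (F_n)_{n ≥ 1}, and let (ξ_n)_{n=1}^{N} be a finite adapted sequence of functions in L^2(μ). Then E[(∑_{n=1}^{N} (E[ξ_n | F_{n-1}])^2)^(1/2)] ≤ 2√2 · E[(∑_{n=1}^{N} ξ_n^2)^(1/2)], where F_0 = F_1. -/
open MeasureTheory Finset

/-!
Davis decomposition: with `Sₙ = √(ξ₁² + ⋯ + ξₙ²)`, split `ξₙ = ψₙ + φₙ` where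
`φₙ = ξₙ Sₙ₋₁ / Sₙ`. Then `|ψₙ| ≤ Sₙ - Sₙ₋₁` and `φₙ² ≤ 2 Sₙ₋₁ (Sₙ - Sₙ₋₁)`. Writing
`A = ∑ₙ E[Sₙ - Sₙ₋₁ | Fₙ₋₁]` for the predictable part of `S`, Minkowski and conditional Jensen
give pointwise
`√(∑ E[ξₙ|Fₙ₋₁]²) ≤ √(∑ E[ψₙ|Fₙ₋₁]²) + √(∑ E[φₙ|Fₙ₋₁]²) ≤ A + √(2 S_N A) ≤ A + (S_N + A) / √2`,
and `E A = E S_N`, so the constant is in fact `1 + √2 ≤ 2√2`.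
-/

section SquareSums

variable {ι : Type*}

lemma sqrt_sum_sq_eq_norm (s : Finset ι) (f : ι → ℝ) :
    √(∑ i ∈ s, f i ^ 2) = ‖(WithLp.toLp 2 fun i : s => f i : EuclideanSpace ℝ s)‖ := by
  simp [EuclideanSpace.norm_eq, Finset.sum_attach s (fun i => f i ^ 2)]

lemma sqrt_sum_sq_add_le (s : Finset ι) (f g : ι → ℝ) :
    √(∑ i ∈ s, (f i + g i) ^ 2) ≤ √(∑ i ∈ s, f i ^ 2) + √(∑ i ∈ s, g i ^ 2) := by
  simp only [sqrt_sum_sq_eq_norm]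
  exact norm_add_le (WithLp.toLp 2 fun i : s => f i : EuclideanSpace ℝ s)
    (WithLp.toLp 2 fun i : s => g i)

lemma sqrt_sum_sq_le_sum_of_abs_le {s : Finset ι} {u c : ι → ℝ} (h : ∀ i ∈ s, |u i| ≤ c i) :
    √(∑ i ∈ s, u i ^ 2) ≤ ∑ i ∈ s, c i := by
  have hc : ∀ i ∈ s, 0 ≤ c i := fun i hi => (abs_nonneg _).trans (h i hi)
  rw [Real.sqrt_le_left (sum_nonneg hc)]
  calc ∑ i ∈ s, u i ^ 2 ≤ ∑ i ∈ s, c i ^ 2 :=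
        sum_le_sum fun i hi => sq_le_sq' (abs_le.mp (h i hi)).1 (abs_le.mp (h i hi)).2
    _ ≤ (∑ i ∈ s, c i) ^ 2 := sum_sq_le_sq_sum_of_nonneg hc

lemma sqrt_sum_sq_le_of_forall_exists_add {s : Finset ι} {y a c : ι → ℝ} {M : ℝ} (hM : 0 ≤ M)
    (haM : ∀ i ∈ s, a i ≤ M)
    (h : ∀ i ∈ s, ∃ u v, y i = u + v ∧ |u| ≤ c i ∧ v ^ 2 ≤ 2 * a i * c i) :
    √(∑ i ∈ s, y i ^ 2) ≤ ∑ i ∈ s, c i + (M + ∑ i ∈ s, c i) / √2 := by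
  choose! u v hy hu hv using h
  set C := ∑ i ∈ s, c i
  have hc : ∀ i ∈ s, 0 ≤ c i := fun i hi => (abs_nonneg _).trans (hu i hi)
  have hC : 0 ≤ C := sum_nonneg hc
  have hv_sum : ∑ i ∈ s, v i ^ 2 ≤ 2 * M * C := by
    rw [mul_sum]
    exact sum_le_sum fun i hi => (hv i hi).trans <|
      mul_le_mul_of_nonneg_right (by linarith [haM i hi]) (hc i hi)
  have amgm : √(2 * M * C) ≤ (M + C) / √2 := by
    rw [le_div_iff₀ (by positivity), ← Real.sqrt_mul (by positivity),
      Real.sqrt_le_left (by positivity)]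
    nlinarith [sq_nonneg (M - C)]
  calc √(∑ i ∈ s, y i ^ 2) = √(∑ i ∈ s, (u i + v i) ^ 2) := by
        rw [sum_congr rfl fun i hi => by rw [hy i hi]]
    _ ≤ √(∑ i ∈ s, u i ^ 2) + √(∑ i ∈ s, v i ^ 2) := sqrt_sum_sq_add_le s u v
    _ ≤ C + (M + C) / √2 :=
        add_le_add (sqrt_sum_sq_le_sum_of_abs_le hu) ((Real.sqrt_le_sqrt hv_sum).trans amgm)

end SquareSums

section DavisSplit

variable {a b x : ℝ}

lemma abs_sub_mul_div_le_sub (ha : 0 ≤ a) (hb : 0 ≤ b) (h : b ^ 2 = a ^ 2 + x ^ 2) :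
    |x - x * (a / b)| ≤ b - a := by
  have hab : a ≤ b := (pow_le_pow_iff_left₀ ha hb two_ne_zero).mp (by nlinarith)
  have hxb : |x| ≤ b := abs_le_of_sq_le_sq (by nlinarith) hb
  rcases hb.eq_or_lt with rfl | hb
  · simp only [div_zero, mul_zero, sub_zero]
    linarith
  rw [show x - x * (a / b) = x * (b - a) / b by field_simp, abs_div, abs_mul,
    abs_of_nonneg (sub_nonneg.mpr hab), abs_of_pos hb, div_le_iff₀ hb]
  nlinarith

lemma sq_mul_div_le (ha : 0 ≤ a) (hb : 0 ≤ b) (h : b ^ 2 = a ^ 2 + x ^ 2) :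
    (x * (a / b)) ^ 2 ≤ 2 * a * (b - a) := by
  have hab : a ≤ b := (pow_le_pow_iff_left₀ ha hb two_ne_zero).mp (by nlinarith)
  rcases hb.eq_or_lt with rfl | hb
  · simp only [div_zero, mul_zero, zero_sub]
    nlinarith
  rw [mul_pow, div_pow, ← mul_div_assoc, div_le_iff₀ (by positivity)]
  nlinarith [mul_nonneg (mul_nonneg ha (sub_nonneg.mpr hab)) (sub_nonneg.mpr hab),
    mul_nonneg (mul_nonneg ha ha) (sub_nonneg.mpr hab)]

lemma abs_mul_div_le_abs (ha : 0 ≤ a) (hb : 0 ≤ b) (h : b ^ 2 = a ^ 2 + x ^ 2) :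
    |x * (a / b)| ≤ |x| := by
  have hab : a ≤ b := (pow_le_pow_iff_left₀ ha hb two_ne_zero).mp (by nlinarith)
  rw [abs_mul]
  exact mul_le_of_le_one_right (abs_nonneg x)
    (abs_le.mpr ⟨by linarith [div_nonneg ha hb], div_le_one_of_le₀ hab hb⟩)

end DavisSplit

section Probability

variable {Ω : Type*} {m m0 : MeasurableSpace Ω} {μ : Measure Ω}

lemma memLp_two_sqrt {g : Ω → ℝ} (hg : Integrable g μ) (hg0 : 0 ≤ᵐ[μ] g) :
    MemLp (fun ω => √(g ω)) 2 μ := by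
  rw [memLp_two_iff_integrable_sq (Real.continuous_sqrt.comp_aestronglyMeasurable hg.1)]
  refine hg.congr ?_
  filter_upwards [hg0] with ω hω
  exact (Real.sq_sqrt hω).symm

lemma condExp_sq_le (hm : m ≤ m0) [SigmaFinite (μ.trim hm)] {f : Ω → ℝ}
    (hf : Integrable f μ) (hf2 : Integrable (fun ω => f ω ^ 2) μ) :
    (fun ω => μ[f|m] ω ^ 2) ≤ᵐ[μ] μ[fun ω => f ω ^ 2|m] :=
  (even_two.convexOn_pow).map_condExp_le hm (continuous_pow 2).continuousOn.lowerSemicontinuousOn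
    (by simp) isClosed_univ hf hf2

lemma ae_exists_condExp_eq_add [IsFiniteMeasure μ] (hm : m ≤ m0) {a x : Ω → ℝ}
    (ha : StronglyMeasurable[m] a) (ha0 : 0 ≤ a) (haL2 : MemLp a 2 μ) (hx : MemLp x 2 μ) :
    ∀ᵐ ω ∂μ, ∃ u v, μ[x|m] ω = u + v ∧
      |u| ≤ μ[(fun ω => √(a ω ^ 2 + x ω ^ 2)) - a|m] ω ∧
      v ^ 2 ≤ 2 * a ω * μ[(fun ω => √(a ω ^ 2 + x ω ^ 2)) - a|m] ω := by
  set b : Ω → ℝ := fun ω => √(a ω ^ 2 + x ω ^ 2)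
  set φ : Ω → ℝ := fun ω => x ω * (a ω / b ω)
  set ψ : Ω → ℝ := x - φ
  have hb0 : ∀ ω, 0 ≤ b ω := fun ω => Real.sqrt_nonneg _
  have hb2 : ∀ ω, b ω ^ 2 = a ω ^ 2 + x ω ^ 2 := fun ω => Real.sq_sqrt (by positivity)
  have hbL2 : MemLp b 2 μ :=
    memLp_two_sqrt (haL2.integrable_sq.add hx.integrable_sq) (ae_of_all _ fun ω => by positivity)
  have hφL2 : MemLp φ 2 μ := by
    refine hx.of_le (hx.1.mul (haL2.1.div₀ hbL2.1)) (ae_of_all _ fun ω => ?_)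
    simpa only [Real.norm_eq_abs] using abs_mul_div_le_abs (ha0 ω) (hb0 ω) (hb2 ω)
  have hψ : Integrable ψ μ := (hx.integrable one_le_two).sub (hφL2.integrable one_le_two)
  have hba : Integrable (b - a) μ := (hbL2.integrable one_le_two).sub (haL2.integrable one_le_two)
  have hψ_le : |μ[ψ|m]| ≤ᵐ[μ] μ[b - a|m] := by
    refine (abs_condExp_ae_le_condExp_abs ψ).trans (condExp_mono hψ.abs hba (ae_of_all _ ?_))
    exact fun ω => abs_sub_mul_div_le_sub (ha0 ω) (hb0 ω) (hb2 ω)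
  have hab : Integrable ((fun ω => 2 * a ω) * (b - a)) μ :=
    (haL2.const_mul 2).integrable_mul (hbL2.sub haL2)
  have hφ_sq : μ[fun ω => φ ω ^ 2|m] ≤ᵐ[μ] μ[(fun ω => 2 * a ω) * (b - a)|m] :=
    condExp_mono hφL2.integrable_sq hab
      (ae_of_all _ fun ω => sq_mul_div_le (ha0 ω) (hb0 ω) (hb2 ω))
  have hpull : μ[(fun ω => 2 * a ω) * (b - a)|m] =ᵐ[μ] (fun ω => 2 * a ω) * μ[b - a|m] :=
    condExp_mul_of_stronglyMeasurable_left (ha.const_mul 2) hab hba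
  have hsplit : μ[x|m] =ᵐ[μ] μ[ψ|m] + μ[φ|m] := by
    rw [show x = ψ + φ from (sub_add_cancel x φ).symm]
    exact condExp_add hψ (hφL2.integrable one_le_two) m
  filter_upwards [hψ_le, condExp_sq_le hm (hφL2.integrable one_le_two) hφL2.integrable_sq,
    hφ_sq, hpull, hsplit] with ω hψω hjensen hφω hpullω hsplitω
  refine ⟨μ[ψ|m] ω, μ[φ|m] ω, hsplitω, hψω, ?_⟩
  calc μ[φ|m] ω ^ 2 ≤ μ[fun ω => φ ω ^ 2|m] ω := hjensen
    _ ≤ _ := hφω.trans_eq hpullω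

end Probability

section SquareFunction

variable {Ω : Type*} {m0 : MeasurableSpace Ω} {μ : Measure Ω}

noncomputable def squareFunction (ξ : ℕ → Ω → ℝ) (n : ℕ) (ω : Ω) : ℝ :=
  √(∑ k ∈ Icc 1 n, ξ k ω ^ 2)

variable {ξ : ℕ → Ω → ℝ}

lemma squareFunction_nonneg (n : ℕ) : 0 ≤ squareFunction ξ n := fun _ => Real.sqrt_nonneg _

@[simp]
lemma squareFunction_zero : squareFunction ξ 0 = 0 := by
  ext ω
  simp [squareFunction]

lemma squareFunction_mono {n k : ℕ} (h : n ≤ k) (ω : Ω) :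
    squareFunction ξ n ω ≤ squareFunction ξ k ω :=
  Real.sqrt_le_sqrt <| sum_le_sum_of_subset_of_nonneg (Icc_subset_Icc_right h)
    fun _ _ _ => sq_nonneg _

lemma squareFunction_succ (n : ℕ) :
    squareFunction ξ (n + 1) = fun ω => √(squareFunction ξ n ω ^ 2 + ξ (n + 1) ω ^ 2) := by
  ext ω
  rw [squareFunction, squareFunction, Real.sq_sqrt (sum_nonneg fun _ _ => sq_nonneg _),
    sum_Icc_succ_top (Nat.le_add_left 1 n)]

lemma stronglyMeasurable_squareFunction {m : MeasurableSpace Ω} {n : ℕ}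
    (h : ∀ k ∈ Icc 1 n, StronglyMeasurable[m] (ξ k)) :
    StronglyMeasurable[m] (squareFunction ξ n) :=
  Real.continuous_sqrt.comp_stronglyMeasurable <|
    Finset.stronglyMeasurable_fun_sum _ fun k hk => (h k hk).pow 2

lemma memLp_squareFunction {n : ℕ} (h : ∀ k ∈ Icc 1 n, MemLp (ξ k) 2 μ) :
    MemLp (squareFunction ξ n) 2 μ :=
  memLp_two_sqrt (integrable_finsetSum _ fun k hk => (h k hk).integrable_sq)
    (ae_of_all _ fun _ => sum_nonneg fun _ _ => sq_nonneg _)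

end SquareFunction

lemma integral_predictablePart {Ω : Type*} {m0 : MeasurableSpace Ω} {μ : Measure Ω}
    {ℱ : Filtration ℕ m0} [SigmaFiniteFiltration μ ℱ] {f : ℕ → Ω → ℝ} {N : ℕ}
    (hf : ∀ n ≤ N, Integrable (f n) μ) :
    ∫ ω, predictablePart f ℱ μ N ω ∂μ = ∫ ω, f N ω ∂μ - ∫ ω, f 0 ω ∂μ := by
  simp only [predictablePart, Finset.sum_apply]
  rw [integral_finsetSum _ fun i _ => integrable_condExp, ← sum_range_sub (fun n => ∫ ω, f n ω ∂μ)]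
  refine sum_congr rfl fun i hi => ?_
  have hi : i + 1 ≤ N := mem_range.mp hi
  rw [integral_condExp (ℱ.le i), integral_sub' (hf _ hi) (hf _ (by omega))]

lemma sum_Icc_one_eq_sum_range {M : Type*} [AddCommMonoid M] (f : ℕ → ℕ → M) (N : ℕ) :
    ∑ n ∈ Icc 1 N, f n (n - 1) = ∑ i ∈ range N, f (i + 1) i := by
  rw [range_eq_Ico]
  exact (sum_Ico_add' (fun n => f n (n - 1)) 0 N 1).symm

section LepingleYor

variable {Ω : Type*} {m0 : MeasurableSpace Ω} {μ : Measure Ω} [IsFiniteMeasure μ]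
  {ℱ : Filtration ℕ m0} {ξ : ℕ → Ω → ℝ} {N : ℕ}

lemma ae_sqrt_sum_sq_condExp_le (hadp : ∀ n ∈ Icc 1 N, StronglyMeasurable[ℱ n] (ξ n))
    (hL2 : ∀ n ∈ Icc 1 N, MemLp (ξ n) 2 μ) :
    ∀ᵐ ω ∂μ, √(∑ n ∈ Icc 1 N, μ[ξ n|ℱ (n - 1)] ω ^ 2) ≤
      predictablePart (squareFunction ξ) ℱ μ N ω +
        (squareFunction ξ N ω + predictablePart (squareFunction ξ) ℱ μ N ω) / √2 := by
  have hstep : ∀ i ∈ range N, ∀ᵐ ω ∂μ, ∃ u v, μ[ξ (i + 1)|ℱ i] ω = u + v ∧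
      |u| ≤ μ[squareFunction ξ (i + 1) - squareFunction ξ i|ℱ i] ω ∧
      v ^ 2 ≤
        2 * squareFunction ξ i ω * μ[squareFunction ξ (i + 1) - squareFunction ξ i|ℱ i] ω := by
    intro i hi
    have hi : i < N := mem_range.mp hi
    rw [squareFunction_succ]
    refine ae_exists_condExp_eq_add (ℱ.le i) ?_ (squareFunction_nonneg i) ?_
      (hL2 _ (mem_Icc.mpr ⟨le_add_self, hi⟩))
    · exact stronglyMeasurable_squareFunction fun k hk =>
        (hadp k (mem_Icc.mpr ⟨(mem_Icc.mp hk).1, by grind⟩)).mono (ℱ.mono (mem_Icc.mp hk).2)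
    · exact memLp_squareFunction fun k hk => hL2 k (mem_Icc.mpr ⟨(mem_Icc.mp hk).1, by grind⟩)
  filter_upwards [(Filter.eventually_all_finset _).mpr hstep] with ω hω
  rw [sum_Icc_one_eq_sum_range (fun n i => μ[ξ n|ℱ i] ω ^ 2)]
  simp only [predictablePart, Finset.sum_apply]
  exact sqrt_sum_sq_le_of_forall_exists_add (squareFunction_nonneg N ω)
    (fun i hi => squareFunction_mono (mem_range.mp hi).le ω) hω

lemma integral_sqrt_sum_sq_condExp_le (hadp : ∀ n ∈ Icc 1 N, StronglyMeasurable[ℱ n] (ξ n))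
    (hL2 : ∀ n ∈ Icc 1 N, MemLp (ξ n) 2 μ) :
    ∫ ω, √(∑ n ∈ Icc 1 N, μ[ξ n|ℱ (n - 1)] ω ^ 2) ∂μ ≤
      (1 + √2) * ∫ ω, squareFunction ξ N ω ∂μ := by
  set A := predictablePart (squareFunction ξ) ℱ μ N
  have hS : ∀ n ≤ N, Integrable (squareFunction ξ n) μ := fun n hn =>
    (memLp_squareFunction fun k hk => hL2 k (mem_Icc.mpr ⟨(mem_Icc.mp hk).1, by grind⟩)).integrable
      one_le_two
  have hA : Integrable A μ := integrable_finsetSum' _ fun _ _ => integrable_condExp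
  have hB : Integrable (fun ω => (squareFunction ξ N ω + A ω) / √2) μ :=
    ((hS N le_rfl).add hA).div_const _
  have hA_int : ∫ ω, A ω ∂μ = ∫ ω, squareFunction ξ N ω ∂μ := by
    simp [A, integral_predictablePart hS]
  calc _ ≤ ∫ ω, A ω + (squareFunction ξ N ω + A ω) / √2 ∂μ :=
        integral_mono_of_nonneg (ae_of_all _ fun _ => Real.sqrt_nonneg _)
          (hA.add hB) (ae_sqrt_sum_sq_condExp_le hadp hL2)
    _ = (1 + √2) * ∫ ω, squareFunction ξ N ω ∂μ := by
        rw [integral_add hA hB, integral_div, integral_add (hS N le_rfl) hA, hA_int, ← two_mul,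
          mul_div_right_comm, Real.div_sqrt]
        ring

end LepingleYor

theorem stmt_6_general {Ω : Type*} [m0 : MeasurableSpace Ω] (μ : Measure Ω)
    [IsProbabilityMeasure μ]
    (F : ℕ → MeasurableSpace Ω) (hmono : Monotone F) (hle : ∀ n, F n ≤ m0)
    (N : ℕ) (ξ : ℕ → Ω → ℝ)
    (hadp : ∀ n ∈ Finset.Icc 1 N, StronglyMeasurable[F n] (ξ n))
    (hL2 : ∀ n ∈ Finset.Icc 1 N, MemLp (ξ n) 2 μ) :
    ∫ ω, Real.sqrt (∑ n ∈ Finset.Icc 1 N, (μ[ξ n|F (n - 1)]) ω ^ 2) ∂μ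
      ≤ 2 * Real.sqrt 2 * ∫ ω, Real.sqrt (∑ n ∈ Finset.Icc 1 N, ξ n ω ^ 2) ∂μ := by
  have hS : 0 ≤ ∫ ω, squareFunction ξ N ω ∂μ := integral_nonneg (squareFunction_nonneg N)
  have hsqrt2 : 1 ≤ √2 := Real.one_le_sqrt.mpr one_le_two
  calc _ ≤ (1 + √2) * ∫ ω, squareFunction ξ N ω ∂μ :=
        integral_sqrt_sum_sq_condExp_le (ℱ := ⟨F, hmono, hle⟩) hadp hL2
    _ ≤ 2 * √2 * ∫ ω, squareFunction ξ N ω ∂μ := by gcongr; linarith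

theorem stmt_6 {Ω : Type*} [m0 : MeasurableSpace Ω] (μ : Measure Ω)
    [IsProbabilityMeasure μ]
    (F : ℕ → MeasurableSpace Ω) (hmono : Monotone F) (hle : ∀ n, F n ≤ m0)
    (hF0 : F 0 = F 1)
    (N : ℕ) (ξ : ℕ → Ω → ℝ)
    (hadp : ∀ n ∈ Finset.Icc 1 N, StronglyMeasurable[F n] (ξ n))
    (hL2 : ∀ n ∈ Finset.Icc 1 N, MemLp (ξ n) 2 μ) :
    ∫ ω, Real.sqrt (∑ n ∈ Finset.Icc 1 N, (μ[ξ n|F (n - 1)]) ω ^ 2) ∂μ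
      ≤ 2 * Real.sqrt 2 * ∫ ω, Real.sqrt (∑ n ∈ Finset.Icc 1 N, ξ n ω ^ 2) ∂μ :=
  stmt_6_general (m0 := m0) μ F hmono hle N ξ hadp hL2
end
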